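/- Let f : ℝⁿ → ℝ have L-Lipschitz continuous gradient and consider one stochastic gradient step x⁺ = x - α·g̃, where the conditional expectation of g̃ is ḡ and α > 0. Then E[f(x⁺)] - f(x) ≤ -(α/2)‖∇f(x)‖² - (α/2 - Lα²/2)‖ḡ‖² + (α/2)‖∇f(x) - ḡ‖² + (Lα²/2)·E[‖g̃ - ḡ‖²], where expectations are conditioned on x. -/

import Mathlib

open MeasureTheory
open scoped RealInnerProductSpace

lemma descent_lemma {n : ℕ} (f : EuclideanSpace ℝ (Fin n) → ℝ)
    (gradf : EuclideanSpace ℝ (Fin n) → EuclideanSpace ℝ (Fin n))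
    (L : ℝ) (hL : 0 < L)
    (hgrad : ∀ x, HasGradientAt f (gradf x) x)
    (hlip : LipschitzWith (Real.toNNReal L) gradf)
    (x y : EuclideanSpace ℝ (Fin n)) :
    f y ≤ f x + ⟪gradf x, y - x⟫ + L / 2 * ‖y - x‖ ^ 2 := by
  set d := y - x with hd
  have hgc : Continuous gradf := hlip.continuous
  have line : ∀ t : ℝ, HasDerivAt (fun t : ℝ => f (x + t • d)) ⟪gradf (x + t • d), d⟫ t := by
    intro t
    have h1 : HasDerivAt (fun t : ℝ => x + t • d) d t := by
      simpa using ((hasDerivAt_id t).smul_const d).const_add x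
    have h2 := (hgrad (x + t • d)).hasFDerivAt
    have h3 := h2.comp_hasDerivAt t h1
    simp at h3
    exact h3
  have contI : Continuous fun t : ℝ => ⟪gradf (x + t • d), d⟫ := by
    exact (hgc.comp (by continuity)).inner continuous_const
  have key : f y - f x = ∫ t in (0:ℝ)..1, ⟪gradf (x + t • d), d⟫ := by
    have := intervalIntegral.integral_eq_sub_of_hasDerivAt (fun t _ => line t)
      (contI.intervalIntegrable 0 1)
    simpa [hd] using this.symm
  have hbound : ∀ t ∈ Set.Icc (0:ℝ) 1,
      ⟪gradf (x + t • d), d⟫ ≤ ⟪gradf x, d⟫ + (L * ‖d‖ ^ 2) * t := by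
    intro t ht
    have h1 : ⟪gradf (x + t • d) - gradf x, d⟫ ≤ ‖gradf (x + t • d) - gradf x‖ * ‖d‖ :=
      real_inner_le_norm _ _
    have h2 : ‖gradf (x + t • d) - gradf x‖ ≤ L * (t * ‖d‖) := by
      have := hlip.dist_le_mul (x + t • d) x
      rw [Real.coe_toNNReal L hL.le] at this
      simpa [dist_eq_norm, norm_smul, abs_of_nonneg ht.1] using this
    have h3 : ⟪gradf (x + t • d) - gradf x, d⟫ ≤ L * ‖d‖ ^ 2 * t := by
      calc ⟪gradf (x + t • d) - gradf x, d⟫ ≤ ‖gradf (x + t • d) - gradf x‖ * ‖d‖ := h1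
        _ ≤ L * (t * ‖d‖) * ‖d‖ := mul_le_mul_of_nonneg_right h2 (norm_nonneg d)
        _ = L * ‖d‖ ^ 2 * t := by ring
    rw [inner_sub_left] at h3; linarith
  have hmono : (∫ t in (0:ℝ)..1, ⟪gradf (x + t • d), d⟫)
      ≤ ∫ t in (0:ℝ)..1, (⟪gradf x, d⟫ + (L * ‖d‖ ^ 2) * t) := by
    apply intervalIntegral.integral_mono_on (by norm_num) (contI.intervalIntegrable 0 1)
      ((by continuity : Continuous fun t : ℝ => ⟪gradf x, d⟫ + (L * ‖d‖ ^ 2) * t).intervalIntegrable 0 1)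
    exact hbound
  have hval : (∫ t in (0:ℝ)..1, (⟪gradf x, d⟫ + (L * ‖d‖ ^ 2) * t))
      = ⟪gradf x, d⟫ + L / 2 * ‖d‖ ^ 2 := by
    have hi2 : IntervalIntegrable (fun t : ℝ => L * ‖d‖ ^ 2 * t) MeasureTheory.volume 0 1 :=
      (continuous_const.mul continuous_id).intervalIntegrable 0 1
    rw [intervalIntegral.integral_add intervalIntegrable_const hi2,
      intervalIntegral.integral_const, intervalIntegral.integral_const_mul,
      integral_id]
    simp only [smul_eq_mul, sub_zero]
    ring
  linarith [key, hmono, hval.le]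

theorem stmt_9 {n : ℕ} (f : EuclideanSpace ℝ (Fin n) → ℝ)
    (gradf : EuclideanSpace ℝ (Fin n) → EuclideanSpace ℝ (Fin n))
    (L α : ℝ) (hL : 0 < L) (hα : 0 < α)
    (hgrad : ∀ x, HasGradientAt f (gradf x) x)
    (hlip : LipschitzWith (Real.toNNReal L) gradf)
    {Ω : Type*} [MeasurableSpace Ω] (P : Measure Ω) [IsProbabilityMeasure P]
    (gt : Ω → EuclideanSpace ℝ (Fin n)) (x : EuclideanSpace ℝ (Fin n))
    (hint : Integrable gt P)
    (hfint : Integrable (fun ω => f (x - α • gt ω)) P)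
    (gb : EuclideanSpace ℝ (Fin n)) (hgb : gb = ∫ ω, gt ω ∂P)
    (hsq : Integrable (fun ω => ‖gt ω - gb‖ ^ 2) P) :
    (∫ ω, f (x - α • gt ω) ∂P) - f x ≤
      -(α / 2) * ‖gradf x‖ ^ 2 - (α / 2 - L * α ^ 2 / 2) * ‖gb‖ ^ 2
        + α / 2 * ‖gradf x - gb‖ ^ 2 + L * α ^ 2 / 2 * ∫ ω, ‖gt ω - gb‖ ^ 2 ∂P := by
  -- integrability pieces
  have hsub : Integrable (fun ω => gt ω - gb) P := hint.sub (integrable_const gb)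
  have hinner1 : Integrable (fun ω => ⟪gradf x, gt ω⟫) P :=
    ContinuousLinearMap.integrable_comp (innerSL ℝ (gradf x)) hint
  have hinner2 : Integrable (fun ω => ⟪gb, gt ω - gb⟫) P :=
    ContinuousLinearMap.integrable_comp (innerSL ℝ gb) hsub
  have hexp : ∀ ω, ‖gt ω‖ ^ 2 = ‖gt ω - gb‖ ^ 2 + 2 * ⟪gb, gt ω - gb⟫ + ‖gb‖ ^ 2 := by
    intro ω
    have h := norm_add_sq_real (gt ω - gb) gb
    rw [sub_add_cancel] at h
    rw [h, real_inner_comm]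
  have hnormsq : Integrable (fun ω => ‖gt ω‖ ^ 2) P := by
    have heq : (fun ω => ‖gt ω‖ ^ 2)
        = fun ω => ‖gt ω - gb‖ ^ 2 + 2 * ⟪gb, gt ω - gb⟫ + ‖gb‖ ^ 2 := funext hexp
    rw [heq]
    exact (hsq.add (hinner2.const_mul 2)).add (integrable_const _)
  -- integral values
  have hIinner : ∫ ω, ⟪gradf x, gt ω⟫ ∂P = ⟪gradf x, gb⟫ := by
    have := (ContinuousLinearMap.integral_comp_comm (innerSL ℝ (gradf x)) hint)
    simpa [hgb] using this
  have hIsub0 : ∫ ω, gt ω - gb ∂P = 0 := by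
    rw [integral_sub hint (integrable_const gb), integral_const]
    simp [hgb]
  have hI2 : ∫ ω, ⟪gb, gt ω - gb⟫ ∂P = 0 := by
    have := (ContinuousLinearMap.integral_comp_comm (innerSL ℝ gb) hsub)
    simp only [innerSL_apply_apply] at this ⊢
    rw [this, hIsub0, inner_zero_right]
  have hInormsq : ∫ ω, ‖gt ω‖ ^ 2 ∂P = (∫ ω, ‖gt ω - gb‖ ^ 2 ∂P) + ‖gb‖ ^ 2 := by
    calc ∫ ω, ‖gt ω‖ ^ 2 ∂P
        = ∫ ω, (‖gt ω - gb‖ ^ 2 + 2 * ⟪gb, gt ω - gb⟫ + ‖gb‖ ^ 2) ∂P := by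
          exact integral_congr_ae (Filter.Eventually.of_forall hexp)
      _ = (∫ ω, ‖gt ω - gb‖ ^ 2 ∂P) + 2 * (∫ ω, ⟪gb, gt ω - gb⟫ ∂P) + ‖gb‖ ^ 2 := by
          have hA : Integrable (fun ω => ‖gt ω - gb‖ ^ 2 + 2 * ⟪gb, gt ω - gb⟫) P :=
            hsq.add (hinner2.const_mul 2)
          rw [integral_add hA (integrable_const _), integral_add hsq (hinner2.const_mul 2),
            integral_const_mul, integral_const]
          simp
      _ = (∫ ω, ‖gt ω - gb‖ ^ 2 ∂P) + ‖gb‖ ^ 2 := by rw [hI2]; ring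
  -- pointwise descent
  have hpt : ∀ ω, f (x - α • gt ω)
      ≤ f x - α * ⟪gradf x, gt ω⟫ + L * α ^ 2 / 2 * ‖gt ω‖ ^ 2 := by
    intro ω
    have := descent_lemma f gradf L hL hgrad hlip x (x - α • gt ω)
    have h1 : x - α • gt ω - x = -(α • gt ω) := by abel
    rw [h1] at this
    have e1 : ⟪gradf x, -(α • gt ω)⟫ = -(α * ⟪gradf x, gt ω⟫) := by
      rw [inner_neg_right, real_inner_smul_right]
    have e2 : ‖-(α • gt ω)‖ ^ 2 = α ^ 2 * ‖gt ω‖ ^ 2 := by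
      rw [norm_neg, norm_smul, mul_pow, Real.norm_eq_abs, sq_abs]
    rw [e1, e2] at this
    linarith
  have hφint : Integrable
      (fun ω => f x - α * ⟪gradf x, gt ω⟫ + L * α ^ 2 / 2 * ‖gt ω‖ ^ 2) P :=
    ((integrable_const (f x)).sub (hinner1.const_mul α)).add (hnormsq.const_mul _)
  have hmain : ∫ ω, f (x - α • gt ω) ∂P
      ≤ f x - α * ⟪gradf x, gb⟫
        + L * α ^ 2 / 2 * ((∫ ω, ‖gt ω - gb‖ ^ 2 ∂P) + ‖gb‖ ^ 2) := by
    calc ∫ ω, f (x - α • gt ω) ∂P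
        ≤ ∫ ω, (f x - α * ⟪gradf x, gt ω⟫ + L * α ^ 2 / 2 * ‖gt ω‖ ^ 2) ∂P :=
          integral_mono hfint hφint hpt
      _ = f x - α * ⟪gradf x, gb⟫
          + L * α ^ 2 / 2 * ((∫ ω, ‖gt ω - gb‖ ^ 2 ∂P) + ‖gb‖ ^ 2) := by
          have hB : Integrable (fun ω => f x - α * ⟪gradf x, gt ω⟫) P :=
            (integrable_const _).sub (hinner1.const_mul α)
          rw [integral_add hB (hnormsq.const_mul _), integral_sub (integrable_const (f x))
            (hinner1.const_mul α), integral_const_mul, integral_const_mul,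
            hIinner, hInormsq, integral_const]
          simp
  have hpol : ‖gradf x - gb‖ ^ 2 = ‖gradf x‖ ^ 2 - 2 * ⟪gradf x, gb⟫ + ‖gb‖ ^ 2 :=
    norm_sub_sq_real _ _
  have hfin : -(α / 2) * ‖gradf x‖ ^ 2 - (α / 2 - L * α ^ 2 / 2) * ‖gb‖ ^ 2
        + α / 2 * ‖gradf x - gb‖ ^ 2 + L * α ^ 2 / 2 * (∫ ω, ‖gt ω - gb‖ ^ 2 ∂P)
      = (f x - α * ⟪gradf x, gb⟫
          + L * α ^ 2 / 2 * ((∫ ω, ‖gt ω - gb‖ ^ 2 ∂P) + ‖gb‖ ^ 2)) - f x := by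
    rw [hpol]; ring
  linarith
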